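/- Strict majorization gives an exact Bradley–Terry representation. Let n ≥ 1 and let x : Fin n → ℝ be monotone increasing with ∑_{i=0}^{k−1} x i > k(k−1)/2 for every 1 ≤ k ≤ n−1 and ∑_{i=0}^{n−1} x i = n(n−1)/2. Then there exists λ : Fin n → ℝ such that x i = ∑_{j ≠ i} L(λ i − λ j) for every i, where L(u) = e^u/(1+e^u). -/

import Mathlib

/-- The logistic function `L(u) = e^u / (1 + e^u)`. -/
noncomputable def logisticL (u : ℝ) : ℝ := Real.exp u / (1 + Real.exp u)

open Finset Real

lemma max_lt_log_exp_add_exp (a b : ℝ) : max a b < Real.log (Real.exp a + Real.exp b) := by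
  rcases le_total a b with h | h
  · rw [max_eq_right h, Real.lt_log_iff_exp_lt (by positivity)]
    linarith [Real.exp_pos a]
  · rw [max_eq_left h, Real.lt_log_iff_exp_lt (by positivity)]
    linarith [Real.exp_pos b]

lemma filter_sum_eq {n m : ℕ} (hmn : m ≤ n) (f : Fin n → ℝ) :
    ∑ i ∈ Finset.univ.filter (fun i : Fin n => (i : ℕ) < m), f i
      = ∑ k ∈ Finset.range m, (if h : k < n then f ⟨k, h⟩ else 0) := by
  rw [Finset.sum_filter]
  rw [show (∑ i : Fin n, if (i:ℕ) < m then f i else 0)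
      = ∑ k ∈ Finset.range n, (if k < m then (if h : k < n then f ⟨k,h⟩ else 0) else 0) from ?_]
  · rw [← Finset.sum_filter]
    congr 1
    ext k
    simp only [Finset.mem_filter, Finset.mem_range]
    omega
  · rw [← Fin.sum_univ_eq_sum_range]
    congr 1; ext i
    simp [i.isLt]

lemma sum_smallest_le {n : ℕ} (x : Fin n → ℝ) (hx : Monotone x) (T : Finset (Fin n)) :
    ∑ k ∈ Finset.range T.card, (if h : k < n then x ⟨k, h⟩ else 0) ≤ ∑ i ∈ T, x i := by
  set m := T.card with hm
  have hmn : m ≤ n := by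
    calc m ≤ (Finset.univ : Finset (Fin n)).card := Finset.card_le_card (Finset.subset_univ T)
    _ = n := by simp
  have e : Fin m ≃o {y // y ∈ T} := T.orderIsoOfFin rfl
  have hle : ∀ j : ℕ, ∀ h : j < m, j ≤ ((e ⟨j, h⟩ : Fin n) : ℕ) := by
    intro j
    induction j with
    | zero => intro h; exact Nat.zero_le _
    | succ j ih =>
      intro h
      have hj : j < m := Nat.lt_of_succ_lt h
      have h1 := ih hj
      have hlt : ((e ⟨j, hj⟩ : Fin n) : ℕ) < ((e ⟨j+1, h⟩ : Fin n) : ℕ) := by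
        have : (⟨j, hj⟩ : Fin m) < ⟨j+1, h⟩ := by simp [Fin.lt_def]
        exact e.strictMono this
      omega
  have h2 : ∑ i ∈ T, x i = ∑ k : Fin m, x (e k) := by
    rw [← Finset.sum_attach T x]
    exact (Equiv.sum_comp e.toEquiv (fun s : {y // y ∈ T} => x s)).symm
  rw [h2, ← Fin.sum_univ_eq_sum_range]
  apply Finset.sum_le_sum
  intro k _
  have hk : (k : ℕ) < n := lt_of_lt_of_le k.isLt hmn
  simp only [hk, dif_pos]
  apply hx
  show (⟨(k:ℕ), hk⟩ : Fin n) ≤ (e k : Fin n)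
  rw [Fin.le_def]
  exact hle k k.isLt

lemma abel_pos (n : ℕ) (A w : ℕ → ℝ) (hA0 : ∑ k ∈ range n, A k = 0)
    (hAneg : ∀ m : ℕ, 1 ≤ m → m + 1 ≤ n → ∑ k ∈ range m, A k < 0)
    (hw : ∀ k, k + 1 < n → w k ≤ w (k + 1))
    (hex : ∃ m, m + 1 < n ∧ w m < w (m + 1)) :
    0 < ∑ k ∈ range n, A k * w k := by
  set d : ℕ → ℝ := fun m => w (m + 1) - w m with hd
  have htel : ∀ k < n, w k = w (n - 1) - ∑ m ∈ Finset.Ico k (n - 1), d m := by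
    intro k hk
    have hkle : k ≤ n - 1 := by omega
    rw [Finset.sum_Ico_eq_sub _ hkle]
    rw [Finset.sum_range_sub w, Finset.sum_range_sub w]
    ring
  have step : ∑ k ∈ range n, A k * w k
      = ∑ m ∈ range (n - 1), (-(∑ k ∈ range (m + 1), A k)) * d m := by
    calc ∑ k ∈ range n, A k * w k
        = ∑ k ∈ range n, (A k * w (n-1) - ∑ m ∈ Finset.Ico k (n-1), A k * d m) := by
          apply Finset.sum_congr rfl
          intro k hk
          rw [htel k (Finset.mem_range.mp hk), ← Finset.mul_sum]
          ring
      _ = (∑ k ∈ range n, A k) * w (n-1)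
            - ∑ k ∈ range n, ∑ m ∈ Finset.Ico k (n-1), A k * d m := by
          rw [Finset.sum_sub_distrib, Finset.sum_mul]
      _ = - ∑ k ∈ range n, ∑ m ∈ range (n-1), (if k ≤ m then A k * d m else 0) := by
          rw [hA0, zero_mul, zero_sub, neg_inj]
          apply Finset.sum_congr rfl
          intro k _
          rw [← Finset.sum_filter]
          apply Finset.sum_congr _ (fun _ _ => rfl)
          ext m
          simp only [Finset.mem_Ico, Finset.mem_filter, Finset.mem_range]
          omega
      _ = - ∑ m ∈ range (n-1), ∑ k ∈ range n, (if k ≤ m then A k * d m else 0) := by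
          rw [Finset.sum_comm]
      _ = ∑ m ∈ range (n - 1), (-(∑ k ∈ range (m + 1), A k)) * d m := by
          rw [← Finset.sum_neg_distrib]
          apply Finset.sum_congr rfl
          intro m hm
          have hm' : m + 1 ≤ n := by
            have := Finset.mem_range.mp hm; omega
          rw [← Finset.sum_filter]
          have hfil : (range n).filter (fun k => k ≤ m) = range (m + 1) := by
            ext k
            simp only [Finset.mem_filter, Finset.mem_range]
            omega
          rw [hfil, ← Finset.sum_mul]
          ring
  rw [step]
  obtain ⟨m0, hm0, hm0'⟩ := hex
  apply Finset.sum_pos'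
  · intro m hm
    have hmr := Finset.mem_range.mp hm
    have h1 : ∑ k ∈ range (m + 1), A k < 0 := hAneg (m+1) (by omega) (by omega)
    have h2 : 0 ≤ d m := by
      have := hw m (by omega)
      simp only [hd]; linarith
    nlinarith
  · refine ⟨m0, Finset.mem_range.mpr (by omega), ?_⟩
    have h1 : ∑ k ∈ range (m0 + 1), A k < 0 := hAneg (m0+1) (by omega) (by omega)
    have h2 : 0 < d m0 := by simp only [hd]; linarith
    nlinarith

lemma hgauss (m : ℕ) : ∑ k ∈ Finset.range m, (k:ℝ) = ((m*(m-1):ℕ):ℝ)/2 := by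
  have h2 : ((∑ i ∈ Finset.range m, i) * 2 : ℕ) = ((m*(m-1):ℕ)) := Finset.sum_range_id_mul_two m
  have h3 : ((m*(m-1):ℕ):ℝ) = (∑ i ∈ Finset.range m, (i:ℝ)) * 2 := by
    rw [← h2]; push_cast; ring
  rw [h3]; ring

lemma key_support {n : ℕ} (hn : 2 ≤ n) (x : Fin n → ℝ) (hx : Monotone x)
    (hstrict : ∀ k : ℕ, 1 ≤ k → k ≤ n - 1 →
      ((k * (k - 1) : ℕ) : ℝ) / 2 <
        ∑ i ∈ Finset.univ.filter (fun i : Fin n => (i : ℕ) < k), x i)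
    (htotal : ∑ i, x i = ((n * (n - 1) : ℕ) : ℝ) / 2)
    (lam : Fin n → ℝ) (hsum : ∑ i, lam i = 0) (hne : lam ≠ 0) :
    2 * ∑ i, x i * lam i <
      ∑ i, ∑ j ∈ Finset.univ.filter (fun j => j ≠ i), max (lam i) (lam j) := by
  classical
  set σ := Tuple.sort lam with hσdef
  set μ := lam ∘ σ with hμdef
  have hμ : Monotone μ := Tuple.monotone_sort lam
  have hμsum : ∑ k, μ k = 0 := by
    rw [hμdef, show ∑ k, (lam ∘ σ) k = ∑ k, lam k from Equiv.sum_comp σ lam]; exact hsum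
  -- RHS computation
  have hRHS : (∑ i, ∑ j ∈ Finset.univ.filter (fun j => j ≠ i), max (lam i) (lam j))
      = ∑ k : Fin n, (2*((k:ℕ):ℝ)+1) * μ k := by
    have step1 : ∀ i, ∑ j ∈ Finset.univ.filter (fun j => j ≠ i), max (lam i) (lam j)
        = (∑ j, max (lam i) (lam j)) - lam i := by
      intro i
      rw [Finset.filter_ne', Finset.sum_erase_eq_sub (mem_univ i)]
      simp
    rw [Finset.sum_congr rfl (fun i _ => step1 i), Finset.sum_sub_distrib, hsum, sub_zero]
    have reind : ∑ i, ∑ j, max (lam i) (lam j) = ∑ i, ∑ j, max (μ i) (μ j) := by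
      rw [← Equiv.sum_comp σ (fun i => ∑ j, max (lam i) (lam j))]
      exact Finset.sum_congr rfl fun i _ =>
        (Equiv.sum_comp σ (fun j => max (lam (σ i)) (lam j))).symm
    rw [reind]
    have hmax : ∀ i j : Fin n, max (μ i) (μ j) = (if j ≤ i then μ i else μ j) := by
      intro i j
      rcases le_or_gt j i with h | h
      · rw [if_pos h, max_eq_left (hμ h)]
      · rw [if_neg (not_le.mpr h), max_eq_right (hμ h.le)]
    calc ∑ i : Fin n, ∑ j : Fin n, max (μ i) (μ j)
        = ∑ i : Fin n, ∑ j : Fin n,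
            ((if j ≤ i then μ i else 0) + (if j ≤ i then 0 else μ j)) := by
          refine Finset.sum_congr rfl fun i _ => Finset.sum_congr rfl fun j _ => ?_
          rw [hmax i j]; split <;> simp
      _ = (∑ i : Fin n, ∑ j : Fin n, (if j ≤ i then μ i else 0))
          + ∑ i : Fin n, ∑ j : Fin n, (if j ≤ i then 0 else μ j) := by
          rw [← Finset.sum_add_distrib]
          exact Finset.sum_congr rfl fun i _ => Finset.sum_add_distrib
      _ = (∑ i : Fin n, (((i:ℕ):ℝ)+1) * μ i) + ∑ j : Fin n, ((j:ℕ):ℝ) * μ j := by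
          congr 1
          · refine Finset.sum_congr rfl fun i _ => ?_
            rw [← Finset.sum_filter, Finset.sum_const]
            have hc : (Finset.univ.filter (fun j : Fin n => j ≤ i)) = Finset.Iic i := by
              ext j; simp
            rw [hc, Fin.card_Iic, nsmul_eq_mul]
            push_cast; ring
          · rw [Finset.sum_comm]
            refine Finset.sum_congr rfl fun j _ => ?_
            have : ∀ i : Fin n, (if j ≤ i then (0:ℝ) else μ j) = (if ¬ j ≤ i then μ j else 0) := by
              intro i; split <;> simp_all
            rw [Finset.sum_congr rfl fun i _ => this i, ← Finset.sum_filter, Finset.sum_const]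
            have hc : (Finset.univ.filter (fun i : Fin n => ¬ j ≤ i)) = Finset.Iio j := by
              ext i; simp
            rw [hc, Fin.card_Iio, nsmul_eq_mul]
      _ = ∑ k : Fin n, (2*((k:ℕ):ℝ)+1) * μ k := by
          rw [← Finset.sum_add_distrib]
          exact Finset.sum_congr rfl fun k _ => by ring
  -- LHS reindex
  have hLHS : ∑ i, x i * lam i = ∑ k : Fin n, x (σ k) * μ k :=
    (Equiv.sum_comp σ (fun i => x i * lam i)).symm
  -- the main positivity
  have hpos : 0 < ∑ k : Fin n, ((2*((k:ℕ):ℝ)) - 2 * x (σ k)) * μ k := by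
    have key := abel_pos n
      (fun k => if h : k < n then (2*(k:ℝ) - 2 * x (σ ⟨k, h⟩)) else 0)
      (fun k => if h : k < n then μ ⟨k, h⟩ else 0)
      ?_ ?_ ?_ ?_
    · rw [← Fin.sum_univ_eq_sum_range
        (fun k => (if h : k < n then (2*(k:ℝ) - 2 * x (σ ⟨k, h⟩)) else 0) *
          (if h : k < n then μ ⟨k, h⟩ else 0)) n] at key
      refine lt_of_lt_of_eq key (Finset.sum_congr rfl fun k _ => ?_)
      simp [k.isLt]
    · -- total sum zero
      rw [← Fin.sum_univ_eq_sum_range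
        (fun k => if h : k < n then (2*(k:ℝ) - 2 * x (σ ⟨k, h⟩)) else 0) n]
      have e1 : ∑ k : Fin n, (if h : (k:ℕ) < n then (2*((k:ℕ):ℝ) - 2 * x (σ ⟨(k:ℕ), h⟩)) else 0)
          = 2 * (∑ k : Fin n, ((k:ℕ):ℝ)) - 2 * ∑ k : Fin n, x (σ k) := by
        rw [Finset.mul_sum, Finset.mul_sum, ← Finset.sum_sub_distrib]
        exact Finset.sum_congr rfl fun k _ => by simp [k.isLt]
      rw [e1, Fin.sum_univ_eq_sum_range (fun k => (k:ℝ)) n, hgauss n,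
        Equiv.sum_comp σ x, htotal]
      ring
    · -- partial sums negative
      intro m h1m hm1n
      have hmn : m ≤ n := by omega
      have e1 : ∑ k ∈ Finset.range m,
          (if h : k < n then (2*(k:ℝ) - 2 * x (σ ⟨k, h⟩)) else 0)
          = 2 * (∑ k ∈ Finset.range m, (k:ℝ))
            - 2 * ∑ k ∈ Finset.range m, (if h : k < n then x (σ ⟨k, h⟩) else 0) := by
        rw [Finset.mul_sum, Finset.mul_sum, ← Finset.sum_sub_distrib]
        refine Finset.sum_congr rfl fun k hk => ?_
        have hkn : k < n := lt_of_lt_of_le (Finset.mem_range.mp hk) hmn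
        simp [hkn]
      rw [e1, hgauss m]
      -- the image finset
      set T : Finset (Fin n) := (Finset.univ.filter (fun i : Fin n => (i:ℕ) < m)).image σ with hT
      have hfc : (Finset.univ.filter (fun i : Fin n => (i:ℕ) < m)).card = m := by
        have hmap : Finset.univ.filter (fun i : Fin n => (i:ℕ) < m)
            = Finset.map (Fin.castLEEmb hmn) Finset.univ := by
          ext i
          simp only [Finset.mem_filter, Finset.mem_univ, true_and, Finset.mem_map,
            Fin.castLEEmb_apply]
          constructor
          · intro h; exact ⟨⟨(i:ℕ), h⟩, by ext; simp⟩
          · rintro ⟨a, rfl⟩; simpa using a.isLt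
        rw [hmap, Finset.card_map, Finset.card_univ, Fintype.card_fin]
      have hTcard : T.card = m := by
        rw [hT, Finset.card_image_of_injective _ σ.injective, hfc]
      have hyT : ∑ i ∈ T, x i
          = ∑ k ∈ Finset.range m, (if h : k < n then x (σ ⟨k, h⟩) else 0) := by
        rw [hT, Finset.sum_image (fun a _ b _ h => σ.injective h)]
        exact filter_sum_eq hmn (fun i => x (σ i))
      have hsm : ∑ k ∈ Finset.range m, (if h : k < n then x ⟨k, h⟩ else 0) ≤ ∑ i ∈ T, x i := by
        have := sum_smallest_le x hx T
        rwa [hTcard] at this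
      have hstr : ((m * (m - 1) : ℕ) : ℝ) / 2
          < ∑ k ∈ Finset.range m, (if h : k < n then x ⟨k, h⟩ else 0) := by
        rw [← filter_sum_eq hmn x]
        exact hstrict m h1m (by omega)
      rw [← hyT]
      linarith
    · -- monotone
      intro k hk
      have hk1 : k < n := by omega
      simp only [hk1, hk, dif_pos]
      exact hμ (by simp [Fin.le_def])
    · -- exists strict increase
      by_contra hcon
      push_neg at hcon
      have weq : ∀ m, m + 1 < n →
          (if h : m + 1 < n then μ ⟨m+1, h⟩ else 0) = (if h : m < n then μ ⟨m, h⟩ else 0) := by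
        intro m hm
        have h1 := hcon m hm
        have h2 : (if h : m < n then μ ⟨m, h⟩ else 0) ≤ (if h : m+1 < n then μ ⟨m+1, h⟩ else 0) := by
          have hm' : m < n := by omega
          simp only [hm, hm', dif_pos]
          exact hμ (by simp [Fin.le_def])
        linarith
      have hconst : ∀ k, ∀ hkn : k < n, μ ⟨k, hkn⟩ = μ ⟨0, by omega⟩ := by
        intro k
        induction k with
        | zero => intro hkn; rfl
        | succ k ih =>
          intro hkn
          have hk : k < n := by omega
          have := weq k hkn
          simp only [hkn, hk, dif_pos] at this
          rw [this]; exact ih hk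
      have h0n : 0 < n := by omega
      have hc : ∀ k : Fin n, μ k = μ ⟨0, h0n⟩ := fun k => by
        conv_lhs => rw [← Fin.eta k k.isLt]
        exact hconst _ _
      have hμ0 : μ ⟨0, h0n⟩ = 0 := by
        have : ∑ k : Fin n, μ k = (n : ℝ) * μ ⟨0, h0n⟩ := by
          rw [Finset.sum_congr rfl (fun k _ => hc k), Finset.sum_const, Finset.card_univ,
            Fintype.card_fin, nsmul_eq_mul]
        rw [hμsum] at this
        have hn0 : (n:ℝ) ≠ 0 := Nat.cast_ne_zero.mpr (by omega)
        exact (mul_eq_zero.mp this.symm).resolve_left hn0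
      apply hne
      funext i
      have h1 : lam i = μ (σ.symm i) := by simp [hμdef]
      rw [h1, hc (σ.symm i), hμ0]
      rfl
  -- combine
  rw [hRHS, hLHS]
  have expand : ∑ k : Fin n, (2*((k:ℕ):ℝ)+1) * μ k
      = ∑ k : Fin n, ((2*((k:ℕ):ℝ)) - 2 * x (σ k)) * μ k
        + 2 * (∑ k : Fin n, x (σ k) * μ k) + ∑ k : Fin n, μ k := by
    rw [Finset.mul_sum, ← Finset.sum_add_distrib, ← Finset.sum_add_distrib]
    exact Finset.sum_congr rfl fun k _ => by ring
  rw [expand, hμsum]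
  linarith

lemma logisticL_eq (a b : ℝ) : logisticL (a - b) = Real.exp a / (Real.exp a + Real.exp b) := by
  unfold logisticL
  rw [Real.exp_sub]
  have hb := Real.exp_pos b
  have ha := Real.exp_pos a
  have h1 : 1 + Real.exp a / Real.exp b = (Real.exp b + Real.exp a) / Real.exp b := by
    field_simp
  rw [h1, div_div_div_eq]
  rw [mul_comm (Real.exp a) (Real.exp b), mul_div_mul_left _ _ (ne_of_gt hb), add_comm]

noncomputable def Gfun {n : ℕ} (x : Fin n → ℝ) (l : Fin n → ℝ) : ℝ :=
  (∑ i, ∑ j ∈ Finset.univ.filter (fun j => j ≠ i), Real.log (Real.exp (l i) + Real.exp (l j)))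
    - 2 * ∑ i, x i * l i

lemma G_hasDerivAt {n : ℕ} (x l : Fin n → ℝ) (i : Fin n) :
    HasDerivAt (fun t => Gfun x (Function.update l i t))
      (2 * (∑ j ∈ Finset.univ.filter (fun j => j ≠ i), logisticL (l i - l j)) - 2 * x i)
      (l i) := by
  classical
  set δ : Fin n → ℝ := fun p => if p = i then 1 else 0 with hδ
  have hv : ∀ p : Fin n, HasDerivAt (fun t => Function.update l i t p) (δ p) (l i) := by
    intro p
    by_cases hp : p = i
    · subst hp
      simp only [hδ, if_pos rfl]
      have : (fun t => Function.update l p t p) = fun t => t := by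
        funext t; rw [Function.update_self]
      rw [this]; exact hasDerivAt_id _
    · simp only [hδ, if_neg hp]
      have : (fun t => Function.update l i t p) = fun _ => l p := by
        funext t; rw [Function.update_of_ne hp]
      rw [this]; exact hasDerivAt_const _ _
  have hvv : ∀ p : Fin n, Function.update l i (l i) p = l p := by
    intro p; rw [Function.update_eq_self]
  -- derivative of each log term
  have hterm : ∀ p q : Fin n, HasDerivAt
      (fun t => Real.log (Real.exp (Function.update l i t p) + Real.exp (Function.update l i t q)))
      ((Real.exp (l p) * δ p + Real.exp (l q) * δ q) / (Real.exp (l p) + Real.exp (l q)))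
      (l i) := by
    intro p q
    have h1 : HasDerivAt (fun t => Real.exp (Function.update l i t p)
        + Real.exp (Function.update l i t q))
        (Real.exp (l p) * δ p + Real.exp (l q) * δ q) (l i) := by
      have ha := ((hv p).exp).add ((hv q).exp)
      simp only [hvv] at ha
      exact ha
    have h2 : Real.exp (l p) + Real.exp (l q) ≠ 0 := by positivity
    have := h1.log (by
      simp only [hvv]
      exact h2)
    simpa only [hvv] using this
  have hsum1 : HasDerivAt (fun t => ∑ p : Fin n, ∑ q ∈ Finset.univ.filter (fun q => q ≠ p),
      Real.log (Real.exp (Function.update l i t p) + Real.exp (Function.update l i t q)))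
      (∑ p : Fin n, ∑ q ∈ Finset.univ.filter (fun q => q ≠ p),
        (Real.exp (l p) * δ p + Real.exp (l q) * δ q) / (Real.exp (l p) + Real.exp (l q)))
      (l i) := by
    apply HasDerivAt.fun_sum
    intro p _
    apply HasDerivAt.fun_sum
    intro q _
    exact hterm p q
  have hsum2 : HasDerivAt (fun t => 2 * ∑ p : Fin n, x p * Function.update l i t p)
      (2 * x i) (l i) := by
    have h1 : HasDerivAt (fun t => ∑ p : Fin n, x p * Function.update l i t p)
        (∑ p : Fin n, x p * δ p) (l i) := by
      apply HasDerivAt.fun_sum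
      intro p _
      exact (hv p).const_mul (x p)
    have h2 : ∑ p : Fin n, x p * δ p = x i := by
      simp only [hδ, mul_ite, mul_one, mul_zero]
      rw [Finset.sum_ite_eq' Finset.univ i x]
      simp
    rw [h2] at h1
    exact h1.const_mul 2
  have htot := hsum1.sub hsum2
  -- identify derivative value
  have hval : (∑ p : Fin n, ∑ q ∈ Finset.univ.filter (fun q => q ≠ p),
        (Real.exp (l p) * δ p + Real.exp (l q) * δ q) / (Real.exp (l p) + Real.exp (l q)))
      = 2 * (∑ j ∈ Finset.univ.filter (fun j => j ≠ i), logisticL (l i - l j)) := by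
    set F : Fin n → Fin n → ℝ := fun p q =>
      (Real.exp (l p) * δ p + Real.exp (l q) * δ q) / (Real.exp (l p) + Real.exp (l q)) with hF
    have hrow_i : ∑ q ∈ Finset.univ.filter (fun q => q ≠ i), F i q
        = ∑ q ∈ Finset.univ.filter (fun q => q ≠ i),
            Real.exp (l i) / (Real.exp (l i) + Real.exp (l q)) := by
      refine Finset.sum_congr rfl fun q hq => ?_
      have hq' : q ≠ i := (Finset.mem_filter.mp hq).2
      simp [hF, hδ, hq']
    have hrow_p : ∀ p : Fin n, p ≠ i → ∑ q ∈ Finset.univ.filter (fun q => q ≠ p), F p q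
        = Real.exp (l i) / (Real.exp (l p) + Real.exp (l i)) := by
      intro p hp
      rw [Finset.filter_ne']
      rw [← Finset.add_sum_erase _ _ (Finset.mem_erase.mpr ⟨Ne.symm hp, Finset.mem_univ i⟩)]
      have hzero : ∑ q ∈ (Finset.univ.erase p).erase i, F p q = 0 := by
        apply Finset.sum_eq_zero
        intro q hq
        have hq1 : q ≠ i := (Finset.mem_erase.mp hq).1
        simp [hF, hδ, hp, hq1]
      rw [hzero, add_zero]
      simp [hF, hδ, hp]
    rw [Finset.sum_congr rfl (fun p (_ : p ∈ Finset.univ) => rfl),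
      ← Finset.add_sum_erase _ _ (Finset.mem_univ i)]
    have hrest : ∑ p ∈ Finset.univ.erase i, ∑ q ∈ Finset.univ.filter (fun q => q ≠ p), F p q
        = ∑ p ∈ Finset.univ.erase i, Real.exp (l i) / (Real.exp (l p) + Real.exp (l i)) := by
      refine Finset.sum_congr rfl fun p hp => hrow_p p (Finset.mem_erase.mp hp).1
    rw [hrest, hrow_i]
    rw [Finset.mul_sum, ← Finset.filter_ne' Finset.univ i]
    rw [← Finset.sum_add_distrib]
    refine Finset.sum_congr rfl fun j hj => ?_
    rw [logisticL_eq]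
    rw [add_comm (Real.exp (l j)) (Real.exp (l i))]
    ring
  rw [hval] at htot
  exact htot

noncomputable def Psi {n : ℕ} (x : Fin n → ℝ) (l : Fin n → ℝ) : ℝ :=
  (∑ i, ∑ j ∈ Finset.univ.filter (fun j => j ≠ i), max (l i) (l j)) - 2 * ∑ i, x i * l i

lemma G_cont {n : ℕ} (x : Fin n → ℝ) : Continuous (Gfun x) := by
  unfold Gfun
  apply Continuous.sub
  · apply continuous_finset_sum
    intro i _
    apply continuous_finset_sum
    intro j _
    apply Continuous.log
    · exact ((Real.continuous_exp.comp (continuous_apply i)).add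
        (Real.continuous_exp.comp (continuous_apply j)))
    · intro l; positivity
  · exact continuous_const.mul
      (continuous_finset_sum _ (fun i _ => continuous_const.mul (continuous_apply i)))

lemma Psi_cont {n : ℕ} (x : Fin n → ℝ) : Continuous (Psi x) := by
  unfold Psi
  apply Continuous.sub
  · apply continuous_finset_sum
    intro i _
    apply continuous_finset_sum
    intro j _
    exact (continuous_apply i).max (continuous_apply j)
  · exact continuous_const.mul
      (continuous_finset_sum _ (fun i _ => continuous_const.mul (continuous_apply i)))

lemma Psi_le_G {n : ℕ} (x l : Fin n → ℝ) : Psi x l ≤ Gfun x l := by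
  unfold Psi Gfun
  apply sub_le_sub_right
  refine Finset.sum_le_sum fun i _ => Finset.sum_le_sum fun j _ =>
    (max_lt_log_exp_add_exp (l i) (l j)).le

lemma Psi_homog {n : ℕ} (x l : Fin n → ℝ) (t : ℝ) (ht : 0 ≤ t) :
    Psi x (t • l) = t * Psi x l := by
  unfold Psi
  rw [mul_sub]
  congr 1
  · rw [Finset.mul_sum]
    refine Finset.sum_congr rfl fun i _ => ?_
    rw [Finset.mul_sum]
    refine Finset.sum_congr rfl fun j _ => ?_
    simp only [Pi.smul_apply, smul_eq_mul]
    exact (mul_max_of_nonneg _ _ ht).symm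
  · simp only [Pi.smul_apply, smul_eq_mul, Finset.mul_sum]
    exact Finset.sum_congr rfl fun i _ => by ring

lemma G_shift {n : ℕ} (x l : Fin n → ℝ) (t : ℝ)
    (htotal : ∑ i, x i = ((n * (n - 1) : ℕ) : ℝ) / 2) :
    Gfun x (fun i => l i + t) = Gfun x l := by
  unfold Gfun
  have hlog : ∀ i j : Fin n, Real.log (Real.exp (l i + t) + Real.exp (l j + t))
      = Real.log (Real.exp (l i) + Real.exp (l j)) + t := by
    intro i j
    rw [Real.exp_add, Real.exp_add, ← add_mul,
      Real.log_mul (by positivity) (Real.exp_ne_zero t), Real.log_exp]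
  have hcard : ∀ i : Fin n, (Finset.univ.filter (fun j => j ≠ i)).card = n - 1 := by
    intro i
    rw [Finset.filter_ne', Finset.card_erase_of_mem (Finset.mem_univ i), Finset.card_univ,
      Fintype.card_fin]
  have h1 : ∑ i : Fin n, ∑ j ∈ Finset.univ.filter (fun j => j ≠ i),
        Real.log (Real.exp (l i + t) + Real.exp (l j + t))
      = (∑ i : Fin n, ∑ j ∈ Finset.univ.filter (fun j => j ≠ i),
          Real.log (Real.exp (l i) + Real.exp (l j))) + ((n * (n-1) : ℕ) : ℝ) * t := by
    have : ∀ i : Fin n, ∑ j ∈ Finset.univ.filter (fun j => j ≠ i),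
        Real.log (Real.exp (l i + t) + Real.exp (l j + t))
        = (∑ j ∈ Finset.univ.filter (fun j => j ≠ i),
            Real.log (Real.exp (l i) + Real.exp (l j))) + ((n - 1 : ℕ) : ℝ) * t := by
      intro i
      rw [Finset.sum_congr rfl (fun j _ => hlog i j), Finset.sum_add_distrib,
        Finset.sum_const, hcard i, nsmul_eq_mul]
    rw [Finset.sum_congr rfl (fun i _ => this i), Finset.sum_add_distrib, Finset.sum_const,
      Finset.card_univ, Fintype.card_fin, nsmul_eq_mul]
    push_cast
    ring
  have h2 : (2 : ℝ) * ∑ i, x i * (l i + t) = 2 * ∑ i, x i * l i + ((n * (n-1) : ℕ) : ℝ) * t := by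
    have : ∀ i : Fin n, x i * (l i + t) = x i * l i + x i * t := fun i => by ring
    rw [Finset.sum_congr rfl (fun i _ => this i), Finset.sum_add_distrib, ← Finset.sum_mul,
      htotal]
    ring
  rw [h1, h2]
  ring

/-- If the monotone vector `x` is strictly majorized by `(0,1,…,n-1)`, then
`x` is exactly the mean score sequence of a Bradley–Terry model. -/
theorem strict_majorization_bradley_terry (n : ℕ) (hn : 1 ≤ n)
    (x : Fin n → ℝ) (hx : Monotone x)
    (hstrict : ∀ k : ℕ, 1 ≤ k → k ≤ n - 1 →
      ((k * (k - 1) : ℕ) : ℝ) / 2 <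
        ∑ i ∈ Finset.univ.filter (fun i : Fin n => (i : ℕ) < k), x i)
    (htotal : ∑ i, x i = ((n * (n - 1) : ℕ) : ℝ) / 2) :
    ∃ lam : Fin n → ℝ, ∀ i,
      x i = ∑ j ∈ Finset.univ.filter (fun j => j ≠ i), logisticL (lam i - lam j) := by
  classical
  rcases eq_or_lt_of_le hn with h1 | hn2
  · -- n = 1
    refine ⟨fun _ => 0, fun i => ?_⟩
    have hfe : Finset.univ.filter (fun j : Fin n => j ≠ i) = ∅ := by
      ext j
      simp only [Finset.mem_filter, Finset.mem_univ, true_and, Finset.notMem_empty,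
        iff_false, not_not]
      have : ∀ a b : Fin n, a = b := by
        intro a b
        have ha := a.isLt; have hb := b.isLt
        ext; omega
      exact this j i
    rw [hfe, Finset.sum_empty]
    have h2 : ∑ j, x j = x i := by
      rw [Finset.sum_eq_single i (fun b _ hb => by
        exfalso; apply hb; ext
        have := b.isLt; have := i.isLt; omega) (fun h => absurd (Finset.mem_univ i) h)]
    rw [← h2, htotal]
    rw [show n * (n - 1) = 0 from by rw [← h1]]
    norm_num
  · have hn2' : 2 ≤ n := hn2
    have h0n : 0 < n := by omega
    -- the hyperplane is closed
    have hsumcont : Continuous (fun l : Fin n → ℝ => ∑ i, l i) :=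
      continuous_finset_sum _ (fun i _ => continuous_apply i)
    have hVclosed : IsClosed {l : Fin n → ℝ | (∑ i, l i) = 0} :=
      isClosed_eq hsumcont continuous_const
    -- compact sphere slice
    set S : Set (Fin n → ℝ) := {l | (∑ i, l i) = 0 ∧ ‖l‖ = 1} with hSdef
    have hSclosed : IsClosed S := by
      have h2 : IsClosed {l : Fin n → ℝ | ‖l‖ = 1} := isClosed_eq continuous_norm continuous_const
      exact hVclosed.inter h2
    have hScompact : IsCompact S := by
      refine (isCompact_closedBall (0 : Fin n → ℝ) 1).of_isClosed_subset hSclosed ?_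
      intro l hl
      rw [Metric.mem_closedBall, dist_zero_right]
      exact le_of_eq hl.2
    -- S nonempty
    set i0 : Fin n := ⟨0, by omega⟩ with hi0
    set i1 : Fin n := ⟨1, by omega⟩ with hi1
    have hne01 : i1 ≠ i0 := by
      intro h
      have := congrArg Fin.val h
      simp [hi0, hi1] at this
    set v0 : Fin n → ℝ := Pi.single i0 (1:ℝ) - Pi.single i1 (1:ℝ) with hv0
    have hv0sum : ∑ i, v0 i = 0 := by
      rw [hv0]
      simp only [Pi.sub_apply]
      rw [Finset.sum_sub_distrib]
      rw [Finset.sum_pi_single' i0 (1:ℝ), Finset.sum_pi_single' i1 (1:ℝ)]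
      simp
    have hv0at : v0 i0 = 1 := by
      rw [hv0]
      simp [Pi.single_apply, hne01]
    have hv0norm : ‖v0‖ = 1 := by
      apply le_antisymm
      · apply pi_norm_le_iff_of_nonneg (by norm_num : (0:ℝ) ≤ 1) |>.mpr
        intro i
        rw [hv0]
        simp only [Pi.sub_apply, Pi.single_apply, Real.norm_eq_abs]
        split_ifs <;> norm_num
      · calc (1:ℝ) = ‖v0 i0‖ := by rw [hv0at]; norm_num
          _ ≤ ‖v0‖ := norm_le_pi_norm v0 i0
    have hSne : S.Nonempty := ⟨v0, hv0sum, hv0norm⟩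
    obtain ⟨s0, hs0S, hs0min⟩ := hScompact.exists_isMinOn hSne (Psi_cont x).continuousOn
    set c := Psi x s0 with hc
    have hcpos : 0 < c := by
      have hs0ne : s0 ≠ 0 := by
        intro h
        have := hs0S.2
        rw [h, norm_zero] at this
        norm_num at this
      have hkey := key_support hn2' x hx hstrict htotal s0 hs0S.1 hs0ne
      rw [hc]
      unfold Psi
      linarith
    -- coercivity
    have hcoer : ∀ l : Fin n → ℝ, (∑ i, l i) = 0 → c * ‖l‖ ≤ Psi x l := by
      intro l hl
      rcases eq_or_ne l 0 with rfl | hlne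
      · simp [Psi]
      · have hnorm : 0 < ‖l‖ := norm_pos_iff.mpr hlne
        have huS : ((‖l‖)⁻¹ • l) ∈ S := by
          constructor
          · simp only [Pi.smul_apply, smul_eq_mul, ← Finset.mul_sum, hl, mul_zero]
          · rw [norm_smul, norm_inv, norm_norm]
            field_simp
        have h1 : c ≤ Psi x ((‖l‖)⁻¹ • l) := isMinOn_iff.mp hs0min _ huS
        have h2 : Psi x l = ‖l‖ * Psi x ((‖l‖)⁻¹ • l) := by
          rw [← Psi_homog x _ ‖l‖ (norm_nonneg l), smul_smul,
            mul_inv_cancel₀ (ne_of_gt hnorm), one_smul]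
        rw [h2, mul_comm]
        exact mul_le_mul_of_nonneg_left h1 (norm_nonneg l)
    -- minimize G on compact slab
    set R : ℝ := max (Gfun x 0 / c) 0 + 1 with hR
    have hRpos : 0 < R := by
      have := le_max_right (Gfun x 0 / c) 0
      rw [hR]; linarith
    set K : Set (Fin n → ℝ) := {l | (∑ i, l i) = 0} ∩ Metric.closedBall 0 R with hK
    have hKcompact : IsCompact K := (isCompact_closedBall _ _).inter_left hVclosed
    have hKne : K.Nonempty := by
      refine ⟨0, by simp, ?_⟩
      rw [Metric.mem_closedBall, dist_zero_right, norm_zero]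
      exact hRpos.le
    obtain ⟨lopt, hloptK, hloptmin⟩ := hKcompact.exists_isMinOn hKne (G_cont x).continuousOn
    have hminV : ∀ l, (∑ i, l i) = 0 → Gfun x lopt ≤ Gfun x l := by
      intro l hl
      by_cases hln : ‖l‖ ≤ R
      · exact isMinOn_iff.mp hloptmin l
          ⟨hl, by rwa [Metric.mem_closedBall, dist_zero_right]⟩
      · push_neg at hln
        have hG0 : Gfun x lopt ≤ Gfun x 0 := isMinOn_iff.mp hloptmin 0
          ⟨by simp, by rw [Metric.mem_closedBall, dist_zero_right, norm_zero]; exact hRpos.le⟩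
        have h3 : c * R < c * ‖l‖ := mul_lt_mul_of_pos_left hln hcpos
        have h4 : Gfun x 0 < c * R := by
          have hlt : Gfun x 0 / c < R := by
            have := le_max_left (Gfun x 0 / c) 0
            rw [hR]; linarith
          calc Gfun x 0 = c * (Gfun x 0 / c) := by field_simp
            _ < c * R := mul_lt_mul_of_pos_left hlt hcpos
        have h5 := hcoer l hl
        have h6 := Psi_le_G x l
        linarith
    have hminAll : ∀ l, Gfun x lopt ≤ Gfun x l := by
      intro l
      set s : ℝ := (∑ i, l i) / n with hs
      have hsum0 : ∑ i, (l i - s) = 0 := by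
        rw [Finset.sum_sub_distrib, Finset.sum_const, Finset.card_univ, Fintype.card_fin,
          nsmul_eq_mul, hs]
        have : (n:ℝ) ≠ 0 := Nat.cast_ne_zero.mpr (by omega)
        field_simp
        ring
      have heq : Gfun x l = Gfun x (fun i => l i - s) := by
        rw [← G_shift x (fun i => l i - s) s htotal]
        congr 1
        funext i
        ring
      rw [heq]
      exact hminV _ hsum0
    refine ⟨lopt, fun i => ?_⟩
    have hloc : IsLocalMin (fun t => Gfun x (Function.update lopt i t)) (lopt i) := by
      apply Filter.Eventually.of_forall
      intro t
      simp only
      rw [Function.update_eq_self]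
      exact hminAll _
    have hzero := hloc.hasDerivAt_eq_zero (G_hasDerivAt x lopt i)
    linarith
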